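/- arXiv:1304.2501 — 4 statements merged into one kernel-verified Lean document; each statement's English description precedes it below -/
import Mathlib

section
/- Let d > 0, let P ∈ [0,1), and let n_0, n_3 ∈ ℕ with n_3 ≥ n_0 + k. Assume |p_n| ≤ P for all n ≥ n_0, |f(u)| ≤ M_d for all u ∈ [−d, d], the constant C satisfies 0 < C ≤ (d − Pd)/(2^{1/γ−1} (M_d)^{1/γ} + 2^{1/γ−1} (d^α)^{1/γ}), all the series below converge absolutely, and α_n ≤ C and β_n ≤ C for all n ≥ n_3, where α_n = Σ_{j=n}^∞ (|1/r_j| Σ_{i=j}^∞ |a_i|)^{1/γ} and β_n = Σ_{j=n}^∞ (|1/r_j| Σ_{i=j}^∞ |q_i|)^{1/γ}. Then for every sequence x with |x_i| ≤ d for all i ≥ n_0 and every n ≥ n_3, one has |(Tx)_n| ≤ d; consequently T maps B into B. -/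
open Filter Topology

/-- Sign-preserving power `x ^ ρ` for a rational exponent `ρ = s/t` (in lowest terms) with
odd denominator `t`: it is the unique real `y` with `y ^ t = x ^ s`.  For `x ≥ 0` it agrees
with the usual real power. -/
noncomputable def opow (x : ℝ) (ρ : ℚ) : ℝ :=
  if Even ρ.num ∨ 0 ≤ x then |x| ^ (ρ : ℝ) else -(|x| ^ (ρ : ℝ))

/-- The operator `T`:
`(Tx)_n = -p_n x_{n-k} - Σ_{j=n}^∞ ((1/r_j) Σ_{i=j}^∞ (a_i f(x_{i+1}) + q_i x_i^α))^{1/γ}`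
for `n ≥ n₃`, and `(Tx)_n = x_n` for `n < n₃`. -/
noncomputable def Tmap (k n₃ : ℕ) (r a p q : ℕ → ℝ) (f : ℝ → ℝ) (α γ : ℚ)
    (x : ℕ → ℝ) (n : ℕ) : ℝ :=
  if n₃ ≤ n then
    -(p n * x (n - k)) -
      ∑' j : ℕ, opow ((1 / r (n + j)) *
        ∑' i : ℕ, (a (n + j + i) * f (x (n + j + i + 1)) +
          q (n + j + i) * opow (x (n + j + i)) α)) γ⁻¹
  else x n

lemma abs_opow (x : ℝ) (ρ : ℚ) : |opow x ρ| = |x| ^ (ρ : ℝ) := by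
  unfold opow
  split
  · exact abs_of_nonneg (Real.rpow_nonneg (abs_nonneg x) _)
  · rw [abs_neg]; exact abs_of_nonneg (Real.rpow_nonneg (abs_nonneg x) _)

lemma opow_of_nonneg {x : ℝ} (hx : 0 ≤ x) (ρ : ℚ) : opow x ρ = x ^ (ρ : ℝ) := by
  unfold opow
  rw [if_pos (Or.inr hx), abs_of_nonneg hx]

lemma rpow_add_le_aux {x y p : ℝ} (hx : 0 ≤ x) (hy : 0 ≤ y) (hp : 1 ≤ p) :
    (x + y) ^ p ≤ 2 ^ (p - 1) * (x ^ p + y ^ p) := by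
  have := NNReal.rpow_add_le_mul_rpow_add_rpow ⟨x, hx⟩ ⟨y, hy⟩ hp
  exact_mod_cast this

set_option maxHeartbeats 2000000 in
/-- Step 1: `T` maps `B = {x : |x_n| ≤ d for n ≥ n₀}` into itself. -/
theorem T_maps_B_into_B
    (k : ℕ) (hk : 0 < k) (α γ : ℚ)
    (hα : 1 ≤ α) (hαden : Odd α.den)
    (hγ0 : 0 < γ) (hγ1 : γ ≤ 1) (hγnum : Odd γ.num) (hγden : Odd γ.den)
    (f : ℝ → ℝ) (r a p q : ℕ → ℝ) (hr : ∀ n, r n ≠ 0)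
    (d : ℝ) (hd : 0 < d) (P : ℝ) (hP0 : 0 ≤ P) (hP1 : P < 1)
    (n₀ n₃ : ℕ) (hn₃ : n₀ + k ≤ n₃)
    (hp : ∀ n, n₀ ≤ n → |p n| ≤ P)
    (Md : ℝ) (hMd : ∀ u : ℝ, |u| ≤ d → |f u| ≤ Md)
    (C : ℝ) (hC0 : 0 < C)
    (hC : C ≤ (d - P * d) /
      (2 ^ ((γ : ℝ)⁻¹ - 1) * Md ^ (γ : ℝ)⁻¹ + 2 ^ ((γ : ℝ)⁻¹ - 1) * (opow d α) ^ (γ : ℝ)⁻¹))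
    (ha : Summable fun i => |a i|) (hq : Summable fun i => |q i|)
    (hαs : Summable fun j => (|1 / r j| * ∑' i : ℕ, |a (j + i)|) ^ (γ : ℝ)⁻¹)
    (hβs : Summable fun j => (|1 / r j| * ∑' i : ℕ, |q (j + i)|) ^ (γ : ℝ)⁻¹)
    (htaila : ∀ n, n₃ ≤ n →
      ∑' j : ℕ, (|1 / r (n + j)| * ∑' i : ℕ, |a (n + j + i)|) ^ (γ : ℝ)⁻¹ ≤ C)
    (htailq : ∀ n, n₃ ≤ n →
      ∑' j : ℕ, (|1 / r (n + j)| * ∑' i : ℕ, |q (n + j + i)|) ^ (γ : ℝ)⁻¹ ≤ C) :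
    ∀ x : ℕ → ℝ, (∀ i, n₀ ≤ i → |x i| ≤ d) →
      (Summable fun i => |a i * f (x (i + 1)) + q i * opow (x i) α|) →
      (∀ n, n₃ ≤ n → Summable fun j =>
        opow ((1 / r (n + j)) * ∑' i : ℕ,
          (a (n + j + i) * f (x (n + j + i + 1)) +
            q (n + j + i) * opow (x (n + j + i)) α)) γ⁻¹) →
      (∀ n, n₃ ≤ n → |Tmap k n₃ r a p q f α γ x n| ≤ d) ∧
      (∀ n, n₀ ≤ n → |Tmap k n₃ r a p q f α γ x n| ≤ d) := by
  intro x hx hS hT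
  set ρ : ℝ := (γ : ℝ)⁻¹ with hρdef
  have hγr0 : (0:ℝ) < (γ:ℝ) := by exact_mod_cast hγ0
  have hρ1 : 1 ≤ ρ := one_le_inv₀ hγr0 |>.mpr (by exact_mod_cast hγ1)
  have hρ0 : 0 ≤ ρ := le_trans zero_le_one hρ1
  have hMd0 : 0 ≤ Md := le_trans (abs_nonneg _) (hMd 0 (by simpa using hd.le))
  have hDα : opow d α = d ^ (α : ℝ) := opow_of_nonneg hd.le α
  have hDαpos : 0 < opow d α := by rw [hDα]; exact Real.rpow_pos_of_pos hd _
  set D : ℝ := 2 ^ (ρ - 1) * Md ^ ρ + 2 ^ (ρ - 1) * (opow d α) ^ ρ with hDdef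
  have h2pos : (0:ℝ) < 2 ^ (ρ - 1) := Real.rpow_pos_of_pos two_pos _
  have hDpos : 0 < D := by
    have h1 : 0 ≤ 2 ^ (ρ - 1) * Md ^ ρ :=
      mul_nonneg h2pos.le (Real.rpow_nonneg hMd0 _)
    have h2 : 0 < 2 ^ (ρ - 1) * (opow d α) ^ ρ :=
      mul_pos h2pos (Real.rpow_pos_of_pos hDαpos _)
    linarith
  have hDC : D * C ≤ d - P * d := by
    have := (le_div_iff₀ hDpos).mp hC
    linarith [this]
  -- the main estimate for n ≥ n₃
  have key : ∀ n, n₃ ≤ n → |Tmap k n₃ r a p q f α γ x n| ≤ d := by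
    intro n hn
    have hn0 : n₀ ≤ n := le_trans (le_trans (Nat.le_add_right n₀ k) hn₃) hn
    -- shifted summabilities
    have hSsh : ∀ m : ℕ, Summable fun i =>
        |a (m + i) * f (x (m + i + 1)) + q (m + i) * opow (x (m + i)) α| :=
      fun m => hS.comp_injective (add_right_injective m)
    have hash : ∀ m : ℕ, Summable fun i => |a (m + i)| :=
      fun m => ha.comp_injective (add_right_injective m)
    have hqsh : ∀ m : ℕ, Summable fun i => |q (m + i)| :=
      fun m => hq.comp_injective (add_right_injective m)
    -- pointwise bound on the summand
    set g : ℕ → ℝ := fun i => a i * f (x (i + 1)) + q i * opow (x i) α with hg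
    have hgbound : ∀ m : ℕ, n₀ ≤ m →
        |g m| ≤ |a m| * Md + |q m| * opow d α := by
      intro m hm
      have h1 : |f (x (m + 1))| ≤ Md := hMd _ (hx (m + 1) (le_trans hm (Nat.le_succ m)))
      have h2 : |opow (x m) α| ≤ opow d α := by
        rw [abs_opow, hDα]
        exact Real.rpow_le_rpow (abs_nonneg _) (hx m hm) (by exact_mod_cast le_trans zero_le_one hα)
      calc |g m| ≤ |a m * f (x (m + 1))| + |q m * opow (x m) α| := abs_add_le _ _
        _ = |a m| * |f (x (m + 1))| + |q m| * |opow (x m) α| := by rw [abs_mul, abs_mul]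
        _ ≤ |a m| * Md + |q m| * opow d α := by
            gcongr <;> positivity
    -- bound on the inner tsum
    have hinner : ∀ j : ℕ, |∑' i : ℕ, g (n + j + i)| ≤
        Md * (∑' i : ℕ, |a (n + j + i)|) + opow d α * (∑' i : ℕ, |q (n + j + i)|) := by
      intro j
      have hsum1 : Summable fun i => |g (n + j + i)| := hSsh (n + j)
      have hsum2 : Summable fun i => |a (n + j + i)| * Md + |q (n + j + i)| * opow d α :=
        (((hash (n + j)).mul_right Md).add ((hqsh (n + j)).mul_right (opow d α)))
      calc |∑' i : ℕ, g (n + j + i)| ≤ ∑' i : ℕ, |g (n + j + i)| := by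
            simpa using norm_tsum_le_tsum_norm (f := fun i => g (n + j + i)) (by simpa using hsum1)
        _ ≤ ∑' i : ℕ, (|a (n + j + i)| * Md + |q (n + j + i)| * opow d α) :=
            Summable.tsum_le_tsum (fun i => hgbound _ (le_trans hn0 (by omega))) hsum1 hsum2
        _ = (∑' i : ℕ, |a (n + j + i)| * Md) + ∑' i : ℕ, |q (n + j + i)| * opow d α :=
            Summable.tsum_add ((hash (n + j)).mul_right Md) ((hqsh (n + j)).mul_right _)
        _ = _ := by rw [tsum_mul_right, tsum_mul_right]; ring
    -- bound each term of the outer series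
    have hcast : ((γ⁻¹ : ℚ) : ℝ) = ρ := by push_cast; rfl
    have houter : ∀ j : ℕ,
        |opow ((1 / r (n + j)) * ∑' i : ℕ, g (n + j + i)) γ⁻¹| ≤
          2 ^ (ρ - 1) * Md ^ ρ * (|1 / r (n + j)| * ∑' i : ℕ, |a (n + j + i)|) ^ ρ +
          2 ^ (ρ - 1) * (opow d α) ^ ρ * (|1 / r (n + j)| * ∑' i : ℕ, |q (n + j + i)|) ^ ρ := by
      intro j
      have hA0 : 0 ≤ ∑' i : ℕ, |a (n + j + i)| := tsum_nonneg fun _ => abs_nonneg _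
      have hQ0 : 0 ≤ ∑' i : ℕ, |q (n + j + i)| := tsum_nonneg fun _ => abs_nonneg _
      have hr0 : (0:ℝ) ≤ |1 / r (n + j)| := abs_nonneg _
      rw [abs_opow, hcast]
      have h1 : |(1 / r (n + j)) * ∑' i : ℕ, g (n + j + i)| ≤
          Md * (|1 / r (n + j)| * ∑' i : ℕ, |a (n + j + i)|) +
          opow d α * (|1 / r (n + j)| * ∑' i : ℕ, |q (n + j + i)|) := by
        rw [abs_mul]
        calc |1 / r (n + j)| * |∑' i : ℕ, g (n + j + i)| ≤
            |1 / r (n + j)| * (Md * (∑' i : ℕ, |a (n + j + i)|) +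
              opow d α * (∑' i : ℕ, |q (n + j + i)|)) :=
              mul_le_mul_of_nonneg_left (hinner j) hr0
          _ = _ := by ring
      calc |(1 / r (n + j)) * ∑' i : ℕ, g (n + j + i)| ^ ρ ≤
            (Md * (|1 / r (n + j)| * ∑' i : ℕ, |a (n + j + i)|) +
              opow d α * (|1 / r (n + j)| * ∑' i : ℕ, |q (n + j + i)|)) ^ ρ :=
            Real.rpow_le_rpow (abs_nonneg _) h1 hρ0
        _ ≤ 2 ^ (ρ - 1) * ((Md * (|1 / r (n + j)| * ∑' i : ℕ, |a (n + j + i)|)) ^ ρ +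
              (opow d α * (|1 / r (n + j)| * ∑' i : ℕ, |q (n + j + i)|)) ^ ρ) :=
            rpow_add_le_aux (mul_nonneg hMd0 (mul_nonneg hr0 hA0))
              (mul_nonneg hDαpos.le (mul_nonneg hr0 hQ0)) hρ1
        _ = _ := by
            rw [Real.mul_rpow hMd0 (mul_nonneg hr0 hA0),
              Real.mul_rpow hDαpos.le (mul_nonneg hr0 hQ0)]
            ring
    -- summability of the majorant
    have hαsn : Summable fun j => (|1 / r (n + j)| * ∑' i : ℕ, |a (n + j + i)|) ^ ρ :=
      hαs.comp_injective (add_right_injective n)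
    have hβsn : Summable fun j => (|1 / r (n + j)| * ∑' i : ℕ, |q (n + j + i)|) ^ ρ :=
      hβs.comp_injective (add_right_injective n)
    have hTn : Summable fun j => opow ((1 / r (n + j)) * ∑' i : ℕ, g (n + j + i)) γ⁻¹ := hT n hn
    have hTabs : Summable fun j => |opow ((1 / r (n + j)) * ∑' i : ℕ, g (n + j + i)) γ⁻¹| :=
      hTn.abs
    -- bound the outer series
    have hsum_le : |∑' j : ℕ, opow ((1 / r (n + j)) * ∑' i : ℕ, g (n + j + i)) γ⁻¹| ≤
        d - P * d := by
      calc |∑' j : ℕ, opow ((1 / r (n + j)) * ∑' i : ℕ, g (n + j + i)) γ⁻¹| ≤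
            ∑' j : ℕ, |opow ((1 / r (n + j)) * ∑' i : ℕ, g (n + j + i)) γ⁻¹| := by
            simpa using norm_tsum_le_tsum_norm
              (f := fun j => opow ((1 / r (n + j)) * ∑' i : ℕ, g (n + j + i)) γ⁻¹)
              (by simpa using hTabs)
        _ ≤ ∑' j : ℕ, (2 ^ (ρ - 1) * Md ^ ρ * (|1 / r (n + j)| * ∑' i : ℕ, |a (n + j + i)|) ^ ρ +
              2 ^ (ρ - 1) * (opow d α) ^ ρ *
                (|1 / r (n + j)| * ∑' i : ℕ, |q (n + j + i)|) ^ ρ) :=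
            Summable.tsum_le_tsum houter hTabs ((hαsn.mul_left _).add (hβsn.mul_left _))
        _ = 2 ^ (ρ - 1) * Md ^ ρ *
              (∑' j : ℕ, (|1 / r (n + j)| * ∑' i : ℕ, |a (n + j + i)|) ^ ρ) +
            2 ^ (ρ - 1) * (opow d α) ^ ρ *
              (∑' j : ℕ, (|1 / r (n + j)| * ∑' i : ℕ, |q (n + j + i)|) ^ ρ) := by
            rw [Summable.tsum_add (hαsn.mul_left _) (hβsn.mul_left _), tsum_mul_left, tsum_mul_left]
        _ ≤ 2 ^ (ρ - 1) * Md ^ ρ * C + 2 ^ (ρ - 1) * (opow d α) ^ ρ * C := by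
            gcongr
            · exact htaila n hn
            · exact htailq n hn
        _ = D * C := by ring
        _ ≤ d - P * d := hDC
    -- conclude
    unfold Tmap
    rw [if_pos hn]
    have hxk : |x (n - k)| ≤ d := hx _ (by omega)
    have hpn : |p n| ≤ P := hp n hn0
    have heq : -(p n * x (n - k)) -
        (∑' j : ℕ, opow ((1 / r (n + j)) * ∑' i : ℕ, g (n + j + i)) γ⁻¹) =
        -((p n * x (n - k)) +
          ∑' j : ℕ, opow ((1 / r (n + j)) * ∑' i : ℕ, g (n + j + i)) γ⁻¹) := by ring
    show |-(p n * x (n - k)) -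
        ∑' j : ℕ, opow ((1 / r (n + j)) * ∑' i : ℕ, g (n + j + i)) γ⁻¹| ≤ d
    rw [heq, abs_neg]
    calc |(p n * x (n - k)) +
          ∑' j : ℕ, opow ((1 / r (n + j)) * ∑' i : ℕ, g (n + j + i)) γ⁻¹| ≤
          |p n * x (n - k)| +
          |∑' j : ℕ, opow ((1 / r (n + j)) * ∑' i : ℕ, g (n + j + i)) γ⁻¹| := abs_add_le _ _
      _ ≤ P * d + (d - P * d) := by
          refine add_le_add ?_ hsum_le
          rw [abs_mul]
          exact mul_le_mul hpn hxk (abs_nonneg _) hP0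
      _ = d := by ring
  refine ⟨key, fun n hn0 => ?_⟩
  by_cases h : n₃ ≤ n
  · exact key n h
  · rw [Tmap, if_neg h]; exact hx n hn0
end

section
/- Let d > 0 and let c* > 0 be such that Σ_{i=j}^∞ |a_i f(x_{i+1}) + q_i x_i^α| ≤ c* for every j and every sequence x ∈ B. Let L_γ be a Lipschitz constant of t ↦ t^{1/γ} on [−c*, c*], L_d a Lipschitz constant of f on [−d, d], and L_α a Lipschitz constant of u ↦ u^α on [−d, d]. Then for all x, y ∈ B and all n ≥ n_3, |(Tx)_n − (Ty)_n| ≤ |p_n| |x_{n−k} − y_{n−k}| + L_γ L_d Σ_{j=n}^∞ |1/r_j|^{1/γ} Σ_{i=j}^∞ |a_i| |x_{i+1} − y_{i+1}| + L_γ L_α Σ_{j=n}^∞ |1/r_j|^{1/γ} Σ_{i=j}^∞ |q_i| |x_i − y_i|, provided all the series involved converge absolutely. -/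
open Filter Topology

lemma opow_eq_sign_mul_of_not_even {ρ : ℚ} (hρ : ¬Even ρ.num) (x : ℝ) :
    opow x ρ = SignType.sign x * |x| ^ (ρ : ℝ) := by
  have hρ0 : (ρ : ℝ) ≠ 0 := by
    rintro h
    exact hρ (by simp [Rat.cast_eq_zero.mp h])
  rcases lt_trichotomy x 0 with hx | rfl | hx
  · simp [opow, hρ, hx.not_ge, hx]
  · simp [opow, Real.zero_rpow hρ0]
  · simp [opow, hx.le, hx]

lemma opow_mul (x y : ℝ) (ρ : ℚ) : opow (x * y) ρ = opow x ρ * opow y ρ := by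
  by_cases hρ : Even ρ.num
  · simp [opow, hρ, abs_mul, Real.mul_rpow]
  · simp only [opow_eq_sign_mul_of_not_even hρ, sign_mul, SignType.coe_mul, abs_mul,
      Real.mul_rpow (abs_nonneg x) (abs_nonneg y)]
    ring

lemma abs_opow_mul_sub_opow_mul (c t s : ℝ) (ρ : ℚ) :
    |opow (c * t) ρ - opow (c * s) ρ| = |c| ^ (ρ : ℝ) * |opow t ρ - opow s ρ| := by
  rw [opow_mul, opow_mul, ← mul_sub, abs_mul, abs_opow]

lemma abs_tsum_sub_tsum_le {ι : Type*} {u v g : ι → ℝ} (hu : Summable u) (hv : Summable v)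
    (hg : Summable g) (h : ∀ i, |u i - v i| ≤ g i) : |∑' i, u i - ∑' i, v i| ≤ ∑' i, g i := by
  rw [← hu.tsum_sub hv]
  exact tsum_of_norm_bounded (f := fun i => u i - v i) hg.hasSum h

lemma nonneg_of_abs_sub_le_mul {g : ℝ → ℝ} {c L : ℝ} (hc : 0 < c)
    (hL : ∀ t s, |t| ≤ c → |s| ≤ c → |g t - g s| ≤ L * |t - s|) : 0 ≤ L := by
  have h := hL c 0 (abs_of_pos hc).le (by simpa using hc.le)
  rw [sub_zero, abs_of_pos hc] at h
  exact nonneg_of_mul_nonneg_left ((abs_nonneg _).trans h) hc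

lemma abs_neg_mul_sub_sub_neg_mul_sub_le (c s t u v : ℝ) :
    |(-(c * s) - u) - (-(c * t) - v)| ≤ |c| * |s - t| + |u - v| := by
  calc |(-(c * s) - u) - (-(c * t) - v)| = |-(c * (s - t)) - (u - v)| := by ring_nf
    _ ≤ |c| * |s - t| + |u - v| := by
        simpa only [abs_neg, abs_mul] using abs_sub (-(c * (s - t))) (u - v)

noncomputable def innerTerm (a q : ℕ → ℝ) (f : ℝ → ℝ) (α : ℚ) (x : ℕ → ℝ) (i : ℕ) : ℝ :=
  a i * f (x (i + 1)) + q i * opow (x i) α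

section innerTerm

variable {a q : ℕ → ℝ} {f : ℝ → ℝ} {α : ℚ} {d Ld Lα : ℝ} {n₀ : ℕ} {x y : ℕ → ℝ}
  (hLd : ∀ u v : ℝ, |u| ≤ d → |v| ≤ d → |f u - f v| ≤ Ld * |u - v|)
  (hLα : ∀ u v : ℝ, |u| ≤ d → |v| ≤ d → |opow u α - opow v α| ≤ Lα * |u - v|)
  (hx : ∀ i, n₀ ≤ i → |x i| ≤ d) (hy : ∀ i, n₀ ≤ i → |y i| ≤ d)
include hLd hLα hx hy

lemma abs_innerTerm_sub_le {i : ℕ} (hi : n₀ ≤ i) :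
    |innerTerm a q f α x i - innerTerm a q f α y i| ≤
      Ld * (|a i| * |x (i + 1) - y (i + 1)|) + Lα * (|q i| * |x i - y i|) := by
  have hf := hLd _ _ (hx (i + 1) (by omega)) (hy (i + 1) (by omega))
  have hpow := hLα _ _ (hx i hi) (hy i hi)
  calc |innerTerm a q f α x i - innerTerm a q f α y i|
      = |a i * (f (x (i + 1)) - f (y (i + 1))) + q i * (opow (x i) α - opow (y i) α)| := by
        unfold innerTerm; ring_nf
    _ ≤ |a i| * (Ld * |x (i + 1) - y (i + 1)|) + |q i| * (Lα * |x i - y i|) := by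
        refine (abs_add_le _ _).trans ?_
        rw [abs_mul, abs_mul]
        gcongr
    _ = Ld * (|a i| * |x (i + 1) - y (i + 1)|) + Lα * (|q i| * |x i - y i|) := by ring

lemma abs_tsum_innerTerm_sub_le {m : ℕ} (hm : n₀ ≤ m)
    (hsx : Summable fun i => innerTerm a q f α x (m + i))
    (hsy : Summable fun i => innerTerm a q f α y (m + i))
    (hA : Summable fun i => |a (m + i)| * |x (m + i + 1) - y (m + i + 1)|)
    (hQ : Summable fun i => |q (m + i)| * |x (m + i) - y (m + i)|) :
    |∑' i, innerTerm a q f α x (m + i) - ∑' i, innerTerm a q f α y (m + i)| ≤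
      Ld * ∑' i, |a (m + i)| * |x (m + i + 1) - y (m + i + 1)| +
        Lα * ∑' i, |q (m + i)| * |x (m + i) - y (m + i)| := by
  rw [← tsum_mul_left, ← tsum_mul_left, ← (hA.mul_left Ld).tsum_add (hQ.mul_left Lα)]
  exact abs_tsum_sub_tsum_le hsx hsy ((hA.mul_left Ld).add (hQ.mul_left Lα))
    fun i => abs_innerTerm_sub_le hLd hLα hx hy (by omega)

end innerTerm

theorem T_lipschitz_estimate_general
    (k : ℕ) (α γ : ℚ)
    (f : ℝ → ℝ)
    (r a p q : ℕ → ℝ)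
    (d : ℝ)
    (n₀ n₃ : ℕ) (hn₃ : n₀ + k ≤ n₃)
    (cstar : ℝ) (hcstar0 : 0 < cstar)
    -- `Σ_{i=j}^∞ |a_i f(x_{i+1}) + q_i x_i^α|` converges and is at most `cstar`
    -- for every `j` and every `x ∈ B`
    (hcstar : ∀ x : ℕ → ℝ, (∀ i, n₀ ≤ i → |x i| ≤ d) → ∀ j : ℕ,
      (Summable fun i =>
        |a (j + i) * f (x (j + i + 1)) + q (j + i) * opow (x (j + i)) α|) ∧
      ∑' i : ℕ, |a (j + i) * f (x (j + i + 1)) + q (j + i) * opow (x (j + i)) α| ≤ cstar)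
    (Lγ Ld Lα : ℝ)
    -- `L_γ` is a Lipschitz constant of `t ↦ t^{1/γ}` on `[-cstar, cstar]`
    (hLγ : ∀ t s : ℝ, |t| ≤ cstar → |s| ≤ cstar →
      |opow t γ⁻¹ - opow s γ⁻¹| ≤ Lγ * |t - s|)
    -- `L_d` is a Lipschitz constant of `f` on `[-d, d]`
    (hLd : ∀ u v : ℝ, |u| ≤ d → |v| ≤ d → |f u - f v| ≤ Ld * |u - v|)
    -- `L_α` is a Lipschitz constant of `u ↦ u^α` on `[-d, d]`
    (hLα : ∀ u v : ℝ, |u| ≤ d → |v| ≤ d → |opow u α - opow v α| ≤ Lα * |u - v|) :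
    ∀ x y : ℕ → ℝ, (∀ i, n₀ ≤ i → |x i| ≤ d) → (∀ i, n₀ ≤ i → |y i| ≤ d) →
      -- the series defining `Tx` and `Ty` converge
      (∀ n, n₃ ≤ n → Summable fun j =>
        opow ((1 / r (n + j)) * ∑' i : ℕ,
          (a (n + j + i) * f (x (n + j + i + 1)) +
            q (n + j + i) * opow (x (n + j + i)) α)) γ⁻¹) →
      (∀ n, n₃ ≤ n → Summable fun j =>
        opow ((1 / r (n + j)) * ∑' i : ℕ,
          (a (n + j + i) * f (y (n + j + i + 1)) +
            q (n + j + i) * opow (y (n + j + i)) α)) γ⁻¹) →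
      -- the series appearing on the right-hand side converge absolutely
      (∀ j : ℕ, Summable fun i => |a (j + i)| * |x (j + i + 1) - y (j + i + 1)|) →
      (∀ j : ℕ, Summable fun i => |q (j + i)| * |x (j + i) - y (j + i)|) →
      (∀ n, n₃ ≤ n → Summable fun j => |1 / r (n + j)| ^ (γ : ℝ)⁻¹ *
        ∑' i : ℕ, |a (n + j + i)| * |x (n + j + i + 1) - y (n + j + i + 1)|) →
      (∀ n, n₃ ≤ n → Summable fun j => |1 / r (n + j)| ^ (γ : ℝ)⁻¹ *
        ∑' i : ℕ, |q (n + j + i)| * |x (n + j + i) - y (n + j + i)|) →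
      ∀ n, n₃ ≤ n →
        |Tmap k n₃ r a p q f α γ x n - Tmap k n₃ r a p q f α γ y n| ≤
          |p n| * |x (n - k) - y (n - k)|
          + Lγ * Ld * ∑' j : ℕ, |1 / r (n + j)| ^ (γ : ℝ)⁻¹ *
              ∑' i : ℕ, |a (n + j + i)| * |x (n + j + i + 1) - y (n + j + i + 1)|
          + Lγ * Lα * ∑' j : ℕ, |1 / r (n + j)| ^ (γ : ℝ)⁻¹ *
              ∑' i : ℕ, |q (n + j + i)| * |x (n + j + i) - y (n + j + i)| := by
  intro x y hx hy hsx hsy hA hQ hSA hSQ n hn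
  have hLγ0 : 0 ≤ Lγ := nonneg_of_abs_sub_le_mul hcstar0 hLγ
  have hbound : ∀ z : ℕ → ℝ, (∀ i, n₀ ≤ i → |z i| ≤ d) → ∀ m,
      |∑' i, innerTerm a q f α z (m + i)| ≤ cstar := fun z hz m =>
    (tsum_of_norm_bounded (f := fun i => innerTerm a q f α z (m + i)) (hcstar z hz m).1.hasSum
      fun _ => le_rfl).trans (hcstar z hz m).2
  have hterm : ∀ j, |opow ((1 / r (n + j)) * ∑' i, innerTerm a q f α x (n + j + i)) γ⁻¹ -
      opow ((1 / r (n + j)) * ∑' i, innerTerm a q f α y (n + j + i)) γ⁻¹| ≤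
      Lγ * Ld * (|1 / r (n + j)| ^ (γ : ℝ)⁻¹ *
          ∑' i, |a (n + j + i)| * |x (n + j + i + 1) - y (n + j + i + 1)|) +
        Lγ * Lα * (|1 / r (n + j)| ^ (γ : ℝ)⁻¹ *
          ∑' i, |q (n + j + i)| * |x (n + j + i) - y (n + j + i)|) := fun j => by
    rw [abs_opow_mul_sub_opow_mul, Rat.cast_inv]
    have hinner := abs_tsum_innerTerm_sub_le hLd hLα hx hy (by omega : n₀ ≤ n + j)
      (hcstar x hx _).1.of_abs (hcstar y hy _).1.of_abs (hA _) (hQ _)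
    calc _ ≤ |1 / r (n + j)| ^ (γ : ℝ)⁻¹ * (Lγ * (Ld * _ + Lα * _)) := by
          gcongr
          exact (hLγ _ _ (hbound x hx _) (hbound y hy _)).trans
            (mul_le_mul_of_nonneg_left hinner hLγ0)
      _ = _ := by ring
  have htail := abs_tsum_sub_tsum_le (hsx n hn) (hsy n hn)
    (((hSA n hn).mul_left _).add ((hSQ n hn).mul_left _)) hterm
  rw [((hSA n hn).mul_left _).tsum_add ((hSQ n hn).mul_left _), tsum_mul_left,
    tsum_mul_left] at htail
  simp only [Tmap, if_pos hn]
  exact (abs_neg_mul_sub_sub_neg_mul_sub_le _ _ _ _ _).trans (by linarith)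

/-- The basic Lipschitz-type estimate for `T` on `B = {x : |x_n| ≤ d for n ≥ n₀}`:
for all `x, y ∈ B` and `n ≥ n₃`,
`|(Tx)_n - (Ty)_n| ≤ |p_n| |x_{n-k} - y_{n-k}|
  + L_γ L_d Σ_{j=n}^∞ |1/r_j|^{1/γ} Σ_{i=j}^∞ |a_i| |x_{i+1} - y_{i+1}|
  + L_γ L_α Σ_{j=n}^∞ |1/r_j|^{1/γ} Σ_{i=j}^∞ |q_i| |x_i - y_i|`,
provided all the series involved converge absolutely. -/
theorem T_lipschitz_estimate
    (k : ℕ) (hk : 0 < k) (α γ : ℚ)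
    (hα : 1 ≤ α) (hαden : Odd α.den)
    (hγ0 : 0 < γ) (hγ1 : γ ≤ 1) (hγnum : Odd γ.num) (hγden : Odd γ.den)
    (f : ℝ → ℝ) (hf : LocallyLipschitz f)
    (r a p q : ℕ → ℝ) (hr : ∀ n, r n ≠ 0)
    (d : ℝ) (hd : 0 < d)
    (n₀ n₃ : ℕ) (hn₃ : n₀ + k ≤ n₃)
    (cstar : ℝ) (hcstar0 : 0 < cstar)
    -- `Σ_{i=j}^∞ |a_i f(x_{i+1}) + q_i x_i^α|` converges and is at most `cstar`
    -- for every `j` and every `x ∈ B`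
    (hcstar : ∀ x : ℕ → ℝ, (∀ i, n₀ ≤ i → |x i| ≤ d) → ∀ j : ℕ,
      (Summable fun i =>
        |a (j + i) * f (x (j + i + 1)) + q (j + i) * opow (x (j + i)) α|) ∧
      ∑' i : ℕ, |a (j + i) * f (x (j + i + 1)) + q (j + i) * opow (x (j + i)) α| ≤ cstar)
    (Lγ Ld Lα : ℝ)
    -- `L_γ` is a Lipschitz constant of `t ↦ t^{1/γ}` on `[-cstar, cstar]`
    (hLγ : ∀ t s : ℝ, |t| ≤ cstar → |s| ≤ cstar →
      |opow t γ⁻¹ - opow s γ⁻¹| ≤ Lγ * |t - s|)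
    -- `L_d` is a Lipschitz constant of `f` on `[-d, d]`
    (hLd : ∀ u v : ℝ, |u| ≤ d → |v| ≤ d → |f u - f v| ≤ Ld * |u - v|)
    -- `L_α` is a Lipschitz constant of `u ↦ u^α` on `[-d, d]`
    (hLα : ∀ u v : ℝ, |u| ≤ d → |v| ≤ d → |opow u α - opow v α| ≤ Lα * |u - v|) :
    ∀ x y : ℕ → ℝ, (∀ i, n₀ ≤ i → |x i| ≤ d) → (∀ i, n₀ ≤ i → |y i| ≤ d) →
      -- the series defining `Tx` and `Ty` converge
      (∀ n, n₃ ≤ n → Summable fun j =>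
        opow ((1 / r (n + j)) * ∑' i : ℕ,
          (a (n + j + i) * f (x (n + j + i + 1)) +
            q (n + j + i) * opow (x (n + j + i)) α)) γ⁻¹) →
      (∀ n, n₃ ≤ n → Summable fun j =>
        opow ((1 / r (n + j)) * ∑' i : ℕ,
          (a (n + j + i) * f (y (n + j + i + 1)) +
            q (n + j + i) * opow (y (n + j + i)) α)) γ⁻¹) →
      -- the series appearing on the right-hand side converge absolutely
      (∀ j : ℕ, Summable fun i => |a (j + i)| * |x (j + i + 1) - y (j + i + 1)|) →
      (∀ j : ℕ, Summable fun i => |q (j + i)| * |x (j + i) - y (j + i)|) →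
      (∀ n, n₃ ≤ n → Summable fun j => |1 / r (n + j)| ^ (γ : ℝ)⁻¹ *
        ∑' i : ℕ, |a (n + j + i)| * |x (n + j + i + 1) - y (n + j + i + 1)|) →
      (∀ n, n₃ ≤ n → Summable fun j => |1 / r (n + j)| ^ (γ : ℝ)⁻¹ *
        ∑' i : ℕ, |q (n + j + i)| * |x (n + j + i) - y (n + j + i)|) →
      ∀ n, n₃ ≤ n →
        |Tmap k n₃ r a p q f α γ x n - Tmap k n₃ r a p q f α γ y n| ≤
          |p n| * |x (n - k) - y (n - k)|
          + Lγ * Ld * ∑' j : ℕ, |1 / r (n + j)| ^ (γ : ℝ)⁻¹ *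
              ∑' i : ℕ, |a (n + j + i)| * |x (n + j + i + 1) - y (n + j + i + 1)|
          + Lγ * Lα * ∑' j : ℕ, |1 / r (n + j)| ^ (γ : ℝ)⁻¹ *
              ∑' i : ℕ, |q (n + j + i)| * |x (n + j + i) - y (n + j + i)| :=
  T_lipschitz_estimate_general k α γ f r a p q d n₀ n₃ hn₃ cstar hcstar0 hcstar Lγ Ld Lα hLγ hLd hLα
end

section
/- Under the hypotheses of the main existence theorem (α ≥ 1 a rational with odd denominator, γ ∈ (0,1] a ratio of odd positive integers, f locally Lipschitz, Σ_{n=0}^∞ |1/r_n|^{1/γ} Σ_{i=n}^∞ |a_i| < ∞, Σ_{n=0}^∞ |1/r_n|^{1/γ} Σ_{i=n}^∞ |q_i| < ∞, |p_n| ≤ P < 1 for n ≥ n_0, Σ|a_i| < ∞, Σ|q_i| < ∞), and with d, n_0, n_3, B and T as in the construction, there exist constants c_1, c_2 ≥ 0 with P + c_1 + c_2 < 1 such that for every nonempty subset X of B, limsup_{n→∞} diam (T(X))_n ≤ (P + c_1 + c_2) · limsup_{n→∞} diam X_n; that is, μ(T(X)) ≤ κ μ(X) for a constant κ ∈ [0,1),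 where μ(X) = limsup_{n→∞} diam X_n. -/
open Filter Topology

/-- `diamAt X n = diam X_n = sup {|x_n - y_n| : x, y ∈ X}`. -/
noncomputable def diamAt (X : Set (ℕ → ℝ)) (n : ℕ) : ℝ :=
  sSup {v : ℝ | ∃ x ∈ X, ∃ y ∈ X, v = |x n - y n|}

/-!
For `n ≥ n₃`, `(Tx)_n = -p_n x_{n-k} - S(x)_n`, and the series part `S(x)_n` is bounded,
uniformly in `x ∈ B`, by a constant multiple of the tail `∑_{j ≥ n} |1/r_j|^{1/γ} (A_j + Q_j)` of a
convergent series, where `A_j`, `Q_j` are the tails of `∑ |a_i|` and `∑ |q_i|` (once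
`A_j + Q_j ≤ 1`, `(A_j + Q_j)^{1/γ} ≤ A_j + Q_j` since `1/γ ≥ 1`). Hence
`diam (TX)_n ≤ P diam X_{n-k} + o(1)`, and passing to the `limsup` gives `μ(TX) ≤ P μ(X)`:
one may take `c₁ = c₂ = 0`.
-/

noncomputable def absTail (u : ℕ → ℝ) (m : ℕ) : ℝ :=
  ∑' i, |u (m + i)|

noncomputable def seriesPart (r a q : ℕ → ℝ) (f : ℝ → ℝ) (α γ : ℚ) (x : ℕ → ℝ) (n : ℕ) : ℝ :=
  ∑' j : ℕ, opow ((1 / r (n + j)) *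
    ∑' i : ℕ, (a (n + j + i) * f (x (n + j + i + 1)) + q (n + j + i) * opow (x (n + j + i)) α)) γ⁻¹

lemma Tmap_eq_of_le {k n₃ : ℕ} {r a p q : ℕ → ℝ} {f : ℝ → ℝ} {α γ : ℚ} {x : ℕ → ℝ} {n : ℕ}
    (hn : n₃ ≤ n) :
    Tmap k n₃ r a p q f α γ x n = -(p n * x (n - k)) - seriesPart r a q f α γ x n :=
  if_pos hn

lemma abs_opow_le {x d : ℝ} {ρ : ℚ} (hρ : 0 ≤ ρ) (hx : |x| ≤ d) :
    |opow x ρ| ≤ d ^ (ρ : ℝ) :=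
  (abs_opow x ρ).trans_le (Real.rpow_le_rpow (abs_nonneg x) hx (by exact_mod_cast hρ))

lemma tendsto_tsum_nat_add_left (u : ℕ → ℝ) :
    Tendsto (fun n => ∑' i, u (n + i)) atTop (𝓝 0) := by
  refine (tendsto_sum_nat_add u).congr fun n => tsum_congr fun i => ?_
  rw [add_comm]

lemma abs_tsum_mul_add_mul_le {a q g h : ℕ → ℝ} {M D : ℝ}
    (ha : Summable fun i => |a i|) (hq : Summable fun i => |q i|)
    (hg : ∀ i, |g i| ≤ M) (hh : ∀ i, |h i| ≤ D) :
    |∑' i, (a i * g i + q i * h i)| ≤ M * ∑' i, |a i| + D * ∑' i, |q i| := by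
  have hmaj : HasSum (fun i => M * |a i| + D * |q i|) (M * ∑' i, |a i| + D * ∑' i, |q i|) :=
    (ha.hasSum.mul_left M).add (hq.hasSum.mul_left D)
  rw [← Real.norm_eq_abs]
  refine tsum_of_norm_bounded hmaj fun i => ?_
  calc ‖a i * g i + q i * h i‖ ≤ |a i| * |g i| + |q i| * |h i| := by
        simpa only [Real.norm_eq_abs, abs_mul] using abs_add_le (a i * g i) (q i * h i)
    _ ≤ M * |a i| + D * |q i| := by
        nlinarith [mul_le_mul_of_nonneg_left (hg i) (abs_nonneg (a i)),
          mul_le_mul_of_nonneg_left (hh i) (abs_nonneg (q i))]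

lemma rpow_mul_le_of_le_one {ρ s β : ℝ} (hρ : 0 ≤ ρ) (hs₀ : 0 ≤ s) (hs₁ : s ≤ 1) (hβ : 1 ≤ β) :
    (ρ * s) ^ β ≤ ρ ^ β * s := by
  rw [Real.mul_rpow hρ hs₀]
  exact mul_le_mul_of_nonneg_left (Real.rpow_le_self_of_le_one hs₀ hs₁ hβ)
    (Real.rpow_nonneg hρ β)

lemma abs_seriesPart_le {r a q : ℕ → ℝ} {f : ℝ → ℝ} {α γ : ℚ} {d Md : ℝ} {x : ℕ → ℝ} {n : ℕ}
    (hα : 0 ≤ α) (hγ0 : 0 < γ) (hγ1 : γ ≤ 1)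
    (ha : Summable fun i => |a i|) (hq : Summable fun i => |q i|)
    (hψ : Summable fun m => |1 / r m| ^ (γ : ℝ)⁻¹ * (absTail a m + absTail q m))
    (hd : 0 ≤ d) (hMd : ∀ u : ℝ, |u| ≤ d → |f u| ≤ Md)
    (hx : ∀ m, n ≤ m → |x m| ≤ d) (hsmall : ∀ m, n ≤ m → absTail a m + absTail q m ≤ 1) :
    |seriesPart r a q f α γ x n| ≤ max Md (d ^ (α : ℝ)) ^ (γ : ℝ)⁻¹ *
      ∑' j, |1 / r (n + j)| ^ (γ : ℝ)⁻¹ * (absTail a (n + j) + absTail q (n + j)) := by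
  set M := max Md (d ^ (α : ℝ))
  have hM : 0 ≤ M := (Real.rpow_nonneg hd _).trans (le_max_right _ _)
  have hβ : 1 ≤ (γ : ℝ)⁻¹ := (one_le_inv₀ (by exact_mod_cast hγ0)).2 (by exact_mod_cast hγ1)
  have hinner : ∀ m, n ≤ m →
      |∑' i, (a (m + i) * f (x (m + i + 1)) + q (m + i) * opow (x (m + i)) α)| ≤
        M * (absTail a m + absTail q m) := by
    intro m hm
    calc _ ≤ Md * absTail a m + d ^ (α : ℝ) * absTail q m :=
          abs_tsum_mul_add_mul_le (ha.comp_injective (add_right_injective m))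
            (hq.comp_injective (add_right_injective m))
            (fun i => hMd _ (hx _ (by omega))) (fun i => abs_opow_le hα (hx _ (by omega)))
      _ ≤ M * (absTail a m + absTail q m) := by
          have hA : 0 ≤ absTail a m := tsum_nonneg fun _ => abs_nonneg _
          have hQ : 0 ≤ absTail q m := tsum_nonneg fun _ => abs_nonneg _
          nlinarith [le_max_left Md (d ^ (α : ℝ)), le_max_right Md (d ^ (α : ℝ))]
  have hterm : ∀ j, ‖opow ((1 / r (n + j)) * ∑' i, (a (n + j + i) * f (x (n + j + i + 1)) +
      q (n + j + i) * opow (x (n + j + i)) α)) γ⁻¹‖ ≤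
        M ^ (γ : ℝ)⁻¹ * (|1 / r (n + j)| ^ (γ : ℝ)⁻¹ *
          (absTail a (n + j) + absTail q (n + j))) := by
    intro j
    have hAQ : 0 ≤ absTail a (n + j) + absTail q (n + j) :=
      add_nonneg (tsum_nonneg fun _ => abs_nonneg _) (tsum_nonneg fun _ => abs_nonneg _)
    rw [Real.norm_eq_abs, abs_opow, Rat.cast_inv, abs_mul]
    calc _ ≤ (|1 / r (n + j)| * M * (absTail a (n + j) + absTail q (n + j))) ^ (γ : ℝ)⁻¹ := by
          rw [mul_assoc]
          gcongr
          exact hinner _ le_self_add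
      _ ≤ (|1 / r (n + j)| * M) ^ (γ : ℝ)⁻¹ * (absTail a (n + j) + absTail q (n + j)) :=
          rpow_mul_le_of_le_one (by positivity) hAQ (hsmall _ le_self_add) hβ
      _ = _ := by rw [Real.mul_rpow (abs_nonneg _) hM]; ring
  rw [← Real.norm_eq_abs, ← tsum_mul_left]
  exact tsum_of_norm_bounded ((hψ.comp_injective (add_right_injective n)).mul_left _).hasSum hterm

lemma exists_tendsto_zero_abs_seriesPart_le {r a q : ℕ → ℝ} {f : ℝ → ℝ} {α γ : ℚ} {d Md : ℝ}
    (hα : 0 ≤ α) (hγ0 : 0 < γ) (hγ1 : γ ≤ 1)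
    (hra : Summable fun n => |1 / r n| ^ (γ : ℝ)⁻¹ * ∑' i : ℕ, |a (n + i)|)
    (hrq : Summable fun n => |1 / r n| ^ (γ : ℝ)⁻¹ * ∑' i : ℕ, |q (n + i)|)
    (ha : Summable fun i => |a i|) (hq : Summable fun i => |q i|)
    (hd : 0 ≤ d) (hMd : ∀ u : ℝ, |u| ≤ d → |f u| ≤ Md) :
    ∃ ε : ℕ → ℝ, Tendsto ε atTop (𝓝 0) ∧ ∀ᶠ n in atTop, ∀ x : ℕ → ℝ,
      (∀ m, n ≤ m → |x m| ≤ d) → |seriesPart r a q f α γ x n| ≤ ε n := by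
  set ψ := fun m => |1 / r m| ^ (γ : ℝ)⁻¹ * (absTail a m + absTail q m)
  have hψ : Summable ψ := (hra.add hrq).congr fun m => (mul_add _ _ _).symm
  have hsmall : ∀ᶠ m in atTop, absTail a m + absTail q m ≤ 1 :=
    ((tendsto_tsum_nat_add_left fun i => |a i|).add
      (tendsto_tsum_nat_add_left fun i => |q i|)).eventually
      (eventually_le_nhds (by norm_num : (0 : ℝ) + 0 < 1))
  obtain ⟨N, hN⟩ := eventually_atTop.1 hsmall
  refine ⟨fun n => max Md (d ^ (α : ℝ)) ^ (γ : ℝ)⁻¹ * ∑' j, ψ (n + j),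
    by simpa using (tendsto_tsum_nat_add_left ψ).const_mul _, ?_⟩
  filter_upwards [eventually_ge_atTop N] with n hn x hx
  exact abs_seriesPart_le hα hγ0 hγ1 ha hq hψ hd hMd hx fun m hm => hN m (hn.trans hm)

lemma abs_Tmap_sub_le {k n₃ : ℕ} {r a p q : ℕ → ℝ} {f : ℝ → ℝ} {α γ : ℚ} {x y : ℕ → ℝ} {n : ℕ}
    (hn : n₃ ≤ n) :
    |Tmap k n₃ r a p q f α γ x n - Tmap k n₃ r a p q f α γ y n| ≤
      |p n| * |x (n - k) - y (n - k)| +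
        (|seriesPart r a q f α γ x n| + |seriesPart r a q f α γ y n|) := by
  rw [Tmap_eq_of_le hn, Tmap_eq_of_le hn]
  calc _ = |p n * (y (n - k) - x (n - k)) + (seriesPart r a q f α γ y n -
        seriesPart r a q f α γ x n)| := by ring_nf
    _ ≤ |p n * (y (n - k) - x (n - k))| + (|seriesPart r a q f α γ y n| +
        |seriesPart r a q f α γ x n|) := (abs_add_le _ _).trans (by gcongr; exact abs_sub _ _)
    _ = _ := by rw [abs_mul, abs_sub_comm (y _), add_comm |seriesPart _ _ _ _ _ _ y n|]

lemma diamAt_nonneg {X : Set (ℕ → ℝ)} (hX : X.Nonempty) (n : ℕ) : 0 ≤ diamAt X n := by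
  obtain ⟨x₀, hx₀⟩ := hX
  by_cases hb : BddAbove {v : ℝ | ∃ x ∈ X, ∃ y ∈ X, v = |x n - y n|}
  · exact le_csSup hb ⟨x₀, hx₀, x₀, hx₀, by simp⟩
  · exact (Real.sSup_of_not_bddAbove hb).ge

lemma diamAt_le {X : Set (ℕ → ℝ)} {n : ℕ} {c : ℝ} (hX : X.Nonempty)
    (h : ∀ x ∈ X, ∀ y ∈ X, |x n - y n| ≤ c) : diamAt X n ≤ c := by
  obtain ⟨x₀, hx₀⟩ := hX
  refine csSup_le ⟨_, x₀, hx₀, x₀, hx₀, rfl⟩ ?_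
  rintro _ ⟨x, hx, y, hy, rfl⟩
  exact h x hx y hy

lemma abs_sub_le_two_mul {x y d : ℝ} (hx : |x| ≤ d) (hy : |y| ≤ d) : |x - y| ≤ 2 * d := by
  linarith [abs_sub x y]

lemma abs_sub_le_diamAt {X : Set (ℕ → ℝ)} {n : ℕ} {d : ℝ} (hd : ∀ x ∈ X, |x n| ≤ d)
    {x y : ℕ → ℝ} (hx : x ∈ X) (hy : y ∈ X) : |x n - y n| ≤ diamAt X n :=
  le_csSup ⟨2 * d, by rintro _ ⟨x, hx, y, hy, rfl⟩; exact abs_sub_le_two_mul (hd x hx) (hd y hy)⟩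
    ⟨x, hx, y, hy, rfl⟩

lemma limsup_le_mul_limsup_of_eventually_le {u v e : ℕ → ℝ} {P : ℝ} (k : ℕ) (hP : 0 ≤ P)
    (hu : IsBoundedUnder (· ≥ ·) atTop u) (hv : IsBoundedUnder (· ≤ ·) atTop v)
    (he : Tendsto e atTop (𝓝 0)) (h : ∀ᶠ n in atTop, u n ≤ P * v (n - k) + e n) :
    limsup u atTop ≤ P * limsup v atTop := by
  refine le_of_forall_pos_le_add fun δ hδ => ?_
  set η := δ / (P + 1)
  have hη : 0 < η := by positivity
  have hv' : ∀ᶠ n in atTop, v (n - k) < limsup v atTop + η :=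
    (tendsto_sub_atTop_nat k).eventually
      (eventually_lt_of_limsup_lt (lt_add_of_pos_right _ hη) hv)
  have he' : ∀ᶠ n in atTop, e n < η := he.eventually (eventually_lt_nhds hη)
  refine limsup_le_of_le hu.isCoboundedUnder_flip ?_
  filter_upwards [h, hv', he'] with n hn hvn hen
  calc u n ≤ P * (limsup v atTop + η) + η := by nlinarith
    _ = P * limsup v atTop + (P + 1) * η := by ring
    _ = P * limsup v atTop + δ := by rw [mul_div_cancel₀ _ (by positivity)]

theorem measure_of_noncompactness_estimate_general
    (k : ℕ) (α γ : ℚ)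
    (hα : 1 ≤ α)
    (hγ0 : 0 < γ) (hγ1 : γ ≤ 1)
    (f : ℝ → ℝ)
    (r a p q : ℕ → ℝ)
    (hra : Summable fun n => |1 / r n| ^ (γ : ℝ)⁻¹ * ∑' i : ℕ, |a (n + i)|)
    (hrq : Summable fun n => |1 / r n| ^ (γ : ℝ)⁻¹ * ∑' i : ℕ, |q (n + i)|)
    (ha : Summable fun i => |a i|) (hq : Summable fun i => |q i|)
    (d : ℝ) (hd : 0 < d) (P : ℝ) (hP0 : 0 ≤ P) (hP1 : P < 1)
    (n₀ n₃ : ℕ) (hn₃ : n₀ + k ≤ n₃)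
    (hp : ∀ n, n₀ ≤ n → |p n| ≤ P)
    (Md : ℝ) (hMd : ∀ u : ℝ, |u| ≤ d → |f u| ≤ Md) :
    ∃ c₁ c₂ : ℝ, 0 ≤ c₁ ∧ 0 ≤ c₂ ∧ P + c₁ + c₂ < 1 ∧
      ∀ X : Set (ℕ → ℝ), X.Nonempty →
        (∀ x ∈ X, ∀ i, n₀ ≤ i → |x i| ≤ d) →
        limsup (fun n => diamAt ((Tmap k n₃ r a p q f α γ) '' X) n) atTop ≤
          (P + c₁ + c₂) * limsup (fun n => diamAt X n) atTop := by
  obtain ⟨ε, hε, hS⟩ := exists_tendsto_zero_abs_seriesPart_le (zero_le_one.trans hα) hγ0 hγ1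
    hra hrq ha hq hd.le hMd
  refine ⟨0, 0, le_rfl, le_rfl, by linarith, fun X hX hXB => ?_⟩
  rw [add_zero, add_zero]
  refine limsup_le_mul_limsup_of_eventually_le k hP0
    (isBoundedUnder_of_eventually_ge (.of_forall (diamAt_nonneg (hX.image _))))
    (isBoundedUnder_of_eventually_le (eventually_atTop.2 ⟨n₀, fun n hn =>
      diamAt_le hX fun x hx y hy => abs_sub_le_two_mul (hXB x hx n hn) (hXB y hy n hn)⟩))
    (by simpa using hε.add hε) ?_
  filter_upwards [eventually_ge_atTop n₃, hS] with n hn hSn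
  refine diamAt_le (hX.image _) (Set.forall_mem_image.2 fun x hx => Set.forall_mem_image.2
    fun y hy => ?_)
  calc _ ≤ _ := abs_Tmap_sub_le hn
    _ ≤ P * diamAt X (n - k) + (ε n + ε n) := by
      gcongr
      · exact hp n (by omega)
      · exact abs_sub_le_diamAt (fun z hz => hXB z hz (n - k) (by omega)) hx hy
      · exact hSn x fun m hm => hXB x hx m (by omega)
      · exact hSn y fun m hm => hXB y hy m (by omega)

/-- Step 3: comparison of the measure of noncompactness `μ(X) = limsup_n diam X_n`.
There are constants `c₁, c₂ ≥ 0` with `κ = P + c₁ + c₂ < 1` such that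
`μ(T(X)) ≤ κ μ(X)` for every nonempty subset `X` of `B`. -/
theorem measure_of_noncompactness_estimate
    (k : ℕ) (hk : 0 < k) (α γ : ℚ)
    (hα : 1 ≤ α) (hαden : Odd α.den)
    (hγ0 : 0 < γ) (hγ1 : γ ≤ 1) (hγnum : Odd γ.num) (hγden : Odd γ.den)
    (f : ℝ → ℝ) (hf : LocallyLipschitz f)
    (r a p q : ℕ → ℝ) (hr : ∀ n, r n ≠ 0)
    (hra : Summable fun n => |1 / r n| ^ (γ : ℝ)⁻¹ * ∑' i : ℕ, |a (n + i)|)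
    (hrq : Summable fun n => |1 / r n| ^ (γ : ℝ)⁻¹ * ∑' i : ℕ, |q (n + i)|)
    (ha : Summable fun i => |a i|) (hq : Summable fun i => |q i|)
    (d : ℝ) (hd : 0 < d) (P : ℝ) (hP0 : 0 ≤ P) (hP1 : P < 1)
    (n₀ n₃ : ℕ) (hn₃ : n₀ + k ≤ n₃)
    (hp : ∀ n, n₀ ≤ n → |p n| ≤ P)
    (Md : ℝ) (hMd : ∀ u : ℝ, |u| ≤ d → |f u| ≤ Md)
    (C : ℝ) (hC0 : 0 < C)
    (hC : C ≤ (d - P * d) /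
      (2 ^ ((γ : ℝ)⁻¹ - 1) * Md ^ (γ : ℝ)⁻¹ + 2 ^ ((γ : ℝ)⁻¹ - 1) * (opow d α) ^ (γ : ℝ)⁻¹))
    (htaila : ∀ n, n₃ ≤ n →
      ∑' j : ℕ, (|1 / r (n + j)| * ∑' i : ℕ, |a (n + j + i)|) ^ (γ : ℝ)⁻¹ ≤ C)
    (htailq : ∀ n, n₃ ≤ n →
      ∑' j : ℕ, (|1 / r (n + j)| * ∑' i : ℕ, |q (n + j + i)|) ^ (γ : ℝ)⁻¹ ≤ C) :
    ∃ c₁ c₂ : ℝ, 0 ≤ c₁ ∧ 0 ≤ c₂ ∧ P + c₁ + c₂ < 1 ∧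
      ∀ X : Set (ℕ → ℝ), X.Nonempty →
        (∀ x ∈ X, ∀ i, n₀ ≤ i → |x i| ≤ d) →
        limsup (fun n => diamAt ((Tmap k n₃ r a p q f α γ) '' X) n) atTop ≤
          (P + c₁ + c₂) * limsup (fun n => diamAt X n) atTop :=
  measure_of_noncompactness_estimate_general k α γ hα hγ0 hγ1 f r a p q hra hrq ha hq d hd P hP0 hP1
    n₀ n₃ hn₃ hp Md hMd
end

section
/- Let k be a positive integer, α ≥ 1 a rational number with odd denominator, γ ∈ (0,1] a ratio of odd positive integers, a, p, q : ℕ → ℝ, r : ℕ → ℝ∖{0}, f : ℝ → ℝ, and n_3 ≥ k. Suppose x : ℕ → ℝ is a sequence such that for every n ≥ n_3 the series Σ_{i=j}^∞ (a_i f(x_{i+1}) + q_i x_i^α) and Σ_{j=n}^∞ ((1/r_j) Σ_{i=j}^∞ (a_i f(x_{i+1}) + q_i x_i^α))^{1/γ} converge, and x_n = −p_n x_{n−k} − Σ_{j=n}^∞ ((1/r_j) Σ_{i=j}^∞ (a_i f(x_{i+1}) + q_i x_i^α))^{1/γ} for all n ≥ n_3. Then x satisfies Δ(r_n (Δ(x_n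 + p_n x_{n−k}))^γ) + q_n x_n^α + a_n f(x_{n+1}) = 0 for every n ≥ n_3. -/
open Filter Topology

/-- Forward difference of a real sequence: `Δu_n = u_{n+1} - u_n`. -/
def fdiff (u : ℕ → ℝ) (n : ℕ) : ℝ := u (n + 1) - u n

/-- Equation (E): `Δ(r_n (Δ(x_n + p_n x_{n-k}))^γ) + q_n x_n^α + a_n f(x_{n+1}) = 0`. -/
noncomputable def eqnE (k : ℕ) (r a p q : ℕ → ℝ) (f : ℝ → ℝ) (α γ : ℚ)
    (x : ℕ → ℝ) (n : ℕ) : Prop :=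
  fdiff (fun m => r m * opow (fdiff (fun j => x j + p j * x (j - k)) m) γ) n
    + q n * opow (x n) α + a n * f (x (n + 1)) = 0

lemma opow_of_neg {x : ℝ} (hx : x < 0) {ρ : ℚ} (hρ : Odd ρ.num) :
    opow x ρ = -(|x| ^ (ρ : ℝ)) := by
  rw [opow, if_neg (not_or.mpr ⟨Int.not_even_iff_odd.mpr hρ, not_le.mpr hx⟩)]

lemma Rat.odd_inv_num {γ : ℚ} (hγ : γ ≠ 0) (hden : Odd γ.den) : Odd γ⁻¹.num := by
  rw [Rat.num_inv, Int.odd_mul]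
  refine ⟨?_, by exact_mod_cast hden⟩
  rcases Int.sign_trichotomy γ.num with h | h | h <;> simp_all

lemma opow_opow_inv {γ : ℚ} (hγ : γ ≠ 0) (hnum : Odd γ.num) (hden : Odd γ.den) (x : ℝ) :
    opow (opow x γ⁻¹) γ = x := by
  have hγR : (γ : ℝ) ≠ 0 := by exact_mod_cast hγ
  have hcast : ((γ⁻¹ : ℚ) : ℝ) = (γ : ℝ)⁻¹ := Rat.cast_inv γ
  rcases le_or_gt 0 x with hx | hx
  · rw [opow_of_nonneg hx, hcast, opow_of_nonneg (Real.rpow_nonneg hx _),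
      Real.rpow_inv_rpow hx hγR]
  · have habs : 0 < |x| := abs_pos.mpr hx.ne
    have hpow : 0 < |x| ^ (γ : ℝ)⁻¹ := Real.rpow_pos_of_pos habs _
    rw [opow_of_neg hx (Rat.odd_inv_num hγ hden), hcast, opow_of_neg (neg_neg_of_pos hpow) hnum,
      abs_neg, abs_of_pos hpow, Real.rpow_inv_rpow habs.le hγR, abs_of_neg hx, neg_neg]

lemma fdiff_congr_of_ge {u v : ℕ → ℝ} {N n : ℕ} (h : ∀ m, N ≤ m → u m = v m) (hn : N ≤ n) :
    fdiff u n = fdiff v n := by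
  rw [fdiff, fdiff, h n hn, h (n + 1) (hn.trans n.le_succ)]

lemma fdiff_tsum_nat_add {u : ℕ → ℝ} {n : ℕ} (hu : Summable fun i => u (n + i)) :
    fdiff (fun m => ∑' i, u (m + i)) n = -u n := by
  have hsplit := hu.tsum_eq_zero_add
  simp only [add_zero, ← add_assoc, add_right_comm n _ 1] at hsplit
  rw [fdiff, hsplit]
  ring

lemma fdiff_eq_of_eq_neg_tsum_nat_add {y g : ℕ → ℝ} {N n : ℕ}
    (hy : ∀ m, N ≤ m → y m = -∑' j, g (m + j)) (hg : Summable fun j => g (n + j)) (hn : N ≤ n) :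
    fdiff y n = g n := by
  have htail := fdiff_tsum_nat_add hg
  rw [fdiff_congr_of_ge hy hn]
  simp only [fdiff] at htail ⊢
  linarith

theorem fixed_point_is_solution_general
    (k : ℕ) (α γ : ℚ)
    (hγ0 : 0 < γ) (hγnum : Odd γ.num) (hγden : Odd γ.den)
    (f : ℝ → ℝ) (r a p q : ℕ → ℝ) (hr : ∀ n, r n ≠ 0)
    (n₃ : ℕ) (x : ℕ → ℝ)
    -- the inner series `Σ_{i=j}^∞ (a_i f(x_{i+1}) + q_i x_i^α)` converge
    (hinner : ∀ j, n₃ ≤ j → Summable fun i : ℕ =>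
      a (j + i) * f (x (j + i + 1)) + q (j + i) * opow (x (j + i)) α)
    -- the outer series `Σ_{j=n}^∞ ((1/r_j) Σ_{i=j}^∞ (…))^{1/γ}` converge
    (houter : ∀ n, n₃ ≤ n → Summable fun j : ℕ =>
      opow ((1 / r (n + j)) * ∑' i : ℕ,
        (a (n + j + i) * f (x (n + j + i + 1)) +
          q (n + j + i) * opow (x (n + j + i)) α)) γ⁻¹)
    -- the fixed-point identity
    (hfix : ∀ n, n₃ ≤ n →
      x n = -(p n * x (n - k)) -
        ∑' j : ℕ, opow ((1 / r (n + j)) * ∑' i : ℕ,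
          (a (n + j + i) * f (x (n + j + i + 1)) +
            q (n + j + i) * opow (x (n + j + i)) α)) γ⁻¹) :
    ∀ n, n₃ ≤ n → eqnE k r a p q f α γ x n := by
  intro n hn
  set u : ℕ → ℝ := fun m => a m * f (x (m + 1)) + q m * opow (x m) α
  set T : ℕ → ℝ := fun m => ∑' i, u (m + i)
  set G : ℕ → ℝ := fun m => opow ((1 / r m) * T m) γ⁻¹
  have hΔy : ∀ m, n₃ ≤ m → fdiff (fun j => x j + p j * x (j - k)) m = G m := fun m hm =>
    fdiff_eq_of_eq_neg_tsum_nat_add (fun j hj => by rw [hfix j hj]; ring) (houter m hm) hm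
  have hrΔy : ∀ m, n₃ ≤ m → r m * opow (fdiff (fun j => x j + p j * x (j - k)) m) γ = T m := by
    intro m hm
    rw [hΔy m hm, opow_opow_inv hγ0.ne' hγnum hγden, one_div, mul_inv_cancel_left₀ (hr m)]
  have hΔT : fdiff T n = -u n := fdiff_tsum_nat_add (hinner n hn)
  rw [eqnE, fdiff_congr_of_ge hrΔy hn, hΔT]
  ring

/-- Step 4: a sequence satisfying the fixed-point identity
`x_n = -p_n x_{n-k} - Σ_{j=n}^∞ ((1/r_j) Σ_{i=j}^∞ (a_i f(x_{i+1}) + q_i x_i^α))^{1/γ}`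
for all `n ≥ n₃` satisfies equation (E) for all `n ≥ n₃`. -/
theorem fixed_point_is_solution
    (k : ℕ) (hk : 0 < k) (α γ : ℚ)
    (hα : 1 ≤ α) (hαden : Odd α.den)
    (hγ0 : 0 < γ) (hγ1 : γ ≤ 1) (hγnum : Odd γ.num) (hγden : Odd γ.den)
    (f : ℝ → ℝ) (r a p q : ℕ → ℝ) (hr : ∀ n, r n ≠ 0)
    (n₃ : ℕ) (hn₃ : k ≤ n₃) (x : ℕ → ℝ)
    -- the inner series `Σ_{i=j}^∞ (a_i f(x_{i+1}) + q_i x_i^α)` converge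
    (hinner : ∀ j, n₃ ≤ j → Summable fun i : ℕ =>
      a (j + i) * f (x (j + i + 1)) + q (j + i) * opow (x (j + i)) α)
    -- the outer series `Σ_{j=n}^∞ ((1/r_j) Σ_{i=j}^∞ (…))^{1/γ}` converge
    (houter : ∀ n, n₃ ≤ n → Summable fun j : ℕ =>
      opow ((1 / r (n + j)) * ∑' i : ℕ,
        (a (n + j + i) * f (x (n + j + i + 1)) +
          q (n + j + i) * opow (x (n + j + i)) α)) γ⁻¹)
    -- the fixed-point identity
    (hfix : ∀ n, n₃ ≤ n →
      x n = -(p n * x (n - k)) -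
        ∑' j : ℕ, opow ((1 / r (n + j)) * ∑' i : ℕ,
          (a (n + j + i) * f (x (n + j + i + 1)) +
            q (n + j + i) * opow (x (n + j + i)) α)) γ⁻¹) :
    ∀ n, n₃ ≤ n → eqnE k r a p q f α γ x n :=
  fixed_point_is_solution_general k α γ hγ0 hγnum hγden f r a p q hr n₃ x hinner houter hfix
end
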